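/- arXiv:0907.4529 — 2 statements merged into one kernel-verified Lean document; each statement's English description precedes it below -/
import Mathlib

section
/- For Re(s) > 1 and z in the upper half plane, the Lipschitz summation formula holds: Σ_{n=1}^∞ n^{s-1}/Γ(s) · e(nz) = Σ_{n ∈ ℤ} (-2πi)^{-s} (z+n)^{-s}, where e(z) = exp(2πi z), both series converging absolutely, and z^{-s} denotes exp(-s·Log z) with the principal branch of the logarithm. -/
/-- `e(z) = exp(2πi z)`. -/
noncomputable def ee (z : ℂ) : ℂ := Complex.exp (2 * Real.pi * Complex.I * z)

section LipschitzAux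
open MeasureTheory Set Complex Filter Real Metric FourierTransform

noncomputable def lipsG (s z : ℂ) : ℝ → ℂ :=
    Set.indicator (Set.Ioi 0) (fun x : ℝ => (x:ℂ) ^ (s-1) * Complex.exp (2 * Real.pi * Complex.I * z * x))

variable {s z : ℂ}

lemma lips_integA {σ : ℝ} (hσ : -1 < σ) {r : ℝ} (hr : 0 < r) :
    IntegrableOn (fun t : ℝ => t ^ σ * Real.exp (-(r * t))) (Ioi 0) := by
  have h := Real.GammaIntegral_convergent (by linarith : 0 < σ + 1)
  rw [show (0:ℝ) = r * 0 by ring] at h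
  rw [← integrableOn_Ioi_comp_mul_left_iff _ 0 hr] at h
  have h2 : IntegrableOn (fun x => r^(-σ) * (Real.exp (-(r*x)) * (r*x) ^ (σ+1-1))) (Ioi 0) :=
    h.const_mul _
  refine h2.congr_fun ?_ measurableSet_Ioi
  · intro x hx
    have hx0 : (0:ℝ) < x := hx
    simp only [add_sub_cancel_right]
    rw [Real.mul_rpow hr.le hx0.le]
    rw [← mul_assoc, mul_comm (r ^ (-σ)), mul_assoc, ← mul_assoc (r^(-σ)), ← Real.rpow_add hr]
    simp [mul_comm]


lemma lips_integC {s : ℂ} (hs : 0 < s.re) {a : ℂ} (ha : 0 < a.re) :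
    IntegrableOn (fun t : ℝ => (t:ℂ) ^ (s-1) * Complex.exp (-(a * t))) (Ioi 0) := by
  have hcont : ContinuousOn (fun t : ℝ => (t:ℂ) ^ (s-1) * Complex.exp (-(a * t))) (Ioi 0) := by
    apply ContinuousOn.mul
    · apply ContinuousOn.cpow (Complex.continuous_ofReal.continuousOn) continuousOn_const
      intro x hx
      exact Or.inl (by simpa using (hx : (0:ℝ) < x))
    · exact (Complex.continuous_exp.comp (by continuity)).continuousOn
  refine (lips_integA (by linarith : (-1:ℝ) < s.re - 1) ha).mono' (hcont.aestronglyMeasurable measurableSet_Ioi) ?_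
  filter_upwards [ae_restrict_mem measurableSet_Ioi] with t ht
  have ht0 : (0:ℝ) < t := ht
  rw [norm_mul, Complex.norm_cpow_eq_rpow_re_of_pos ht0,
    Complex.norm_exp]
  have : (-(a * t)).re = -(a.re * t) := by simp [Complex.mul_re]
  rw [this, sub_re, one_re]



lemma lips_measC {s : ℂ} (a : ℂ) :
    AEStronglyMeasurable (fun t : ℝ => (t:ℂ) ^ (s-1) * Complex.exp (-(a * t)))
      (volume.restrict (Ioi 0)) := by
  apply ContinuousOn.aestronglyMeasurable ?_ measurableSet_Ioi
  apply ContinuousOn.mul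
  · apply ContinuousOn.cpow (Complex.continuous_ofReal.continuousOn) continuousOn_const
    intro x hx
    exact Or.inl (by simpa using (hx : (0:ℝ) < x))
  · exact (Complex.continuous_exp.comp (by continuity)).continuousOn

lemma lips_hasDerivAt {s : ℂ} (hs : 0 < s.re) {a₀ : ℂ} (ha₀ : 0 < a₀.re) :
    HasDerivAt (fun a : ℂ => ∫ t in Ioi (0:ℝ), (t:ℂ) ^ (s-1) * Complex.exp (-(a * t)))
      (∫ t in Ioi (0:ℝ), (t:ℂ) ^ (s-1) * (Complex.exp (-(a₀ * t)) * -(t:ℂ))) a₀ := by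
  have key := hasDerivAt_integral_of_dominated_loc_of_deriv_le
    (F := fun (a : ℂ) (t : ℝ) => (t:ℂ) ^ (s-1) * Complex.exp (-(a * t)))
    (F' := fun (a : ℂ) (t : ℝ) => (t:ℂ) ^ (s-1) * (Complex.exp (-(a * t)) * -(t:ℂ)))
    (μ := volume.restrict (Ioi 0)) (x₀ := a₀)
    (bound := fun t : ℝ => t ^ s.re * Real.exp (-(a₀.re/2 * t)))
    (s := ball a₀ (a₀.re/2)) (ball_mem_nhds _ (by linarith))
    (Filter.Eventually.of_forall fun a => lips_measC a) (lips_integC hs ha₀) ?_ ?_ ?_ ?_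
  · exact key.2
  · -- measurability of F' a₀
    apply ContinuousOn.aestronglyMeasurable ?_ measurableSet_Ioi
    apply ContinuousOn.mul
    · apply ContinuousOn.cpow (Complex.continuous_ofReal.continuousOn) continuousOn_const
      intro x hx
      exact Or.inl (by simpa using (hx : (0:ℝ) < x))
    · exact ((Complex.continuous_exp.comp (by continuity)).mul (by continuity)).continuousOn
  · -- bound
    filter_upwards [ae_restrict_mem measurableSet_Ioi] with t ht a ha
    have ht0 : (0:ℝ) < t := ht
    have hre : a₀.re/2 ≤ a.re := by
      have h1 : |(a - a₀).re| ≤ ‖a - a₀‖ := Complex.abs_re_le_norm _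
      rw [mem_ball_iff_norm] at ha
      have h2 : |a.re - a₀.re| < a₀.re/2 := lt_of_le_of_lt (by simpa using h1) ha
      have := abs_lt.mp h2
      linarith [this.1]
    rw [norm_mul, norm_mul, norm_neg, Complex.norm_cpow_eq_rpow_re_of_pos ht0, Complex.norm_exp,
      Complex.norm_real, Real.norm_eq_abs, abs_of_pos ht0]
    have h1 : (-(a * t)).re = -(a.re * t) := by simp [Complex.mul_re]
    rw [h1, sub_re, one_re]
    calc t ^ (s.re - 1) * (Real.exp (-(a.re * t)) * t)
        = t ^ (s.re - 1) * t * Real.exp (-(a.re * t)) := by ring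
      _ ≤ t ^ s.re * Real.exp (-(a₀.re/2 * t)) := by
          rw [← Real.rpow_add_one ht0.ne' (s.re - 1), sub_add_cancel]
          have : Real.exp (-(a.re * t)) ≤ Real.exp (-(a₀.re/2 * t)) := by
            apply Real.exp_le_exp.mpr
            rw [neg_le_neg_iff]
            exact mul_le_mul_of_nonneg_right hre ht0.le
          exact mul_le_mul_of_nonneg_left this (Real.rpow_nonneg ht0.le _)
  · exact lips_integA (by linarith) (by linarith)
  · -- differentiability
    filter_upwards [ae_restrict_mem measurableSet_Ioi] with t ht a ha
    have : HasDerivAt (fun a : ℂ => Complex.exp (-(a * t))) (Complex.exp (-(a * t)) * -(t:ℂ)) a := by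
      have h1 : HasDerivAt (fun a : ℂ => -(a * (t:ℂ))) (-(1 * (t:ℂ))) a :=
        ((hasDerivAt_id a).mul_const (t:ℂ)).neg
      simpa using h1.cexp
    exact this.const_mul _



lemma lips_key_int {s : ℂ} (hs : 0 < s.re) {a : ℂ} (ha : 0 < a.re) :
    ∫ t in Ioi (0:ℝ), (t:ℂ) ^ (s-1) * Complex.exp (-(a * t)) = Complex.Gamma s * a ^ (-s) := by
  set U : Set ℂ := {a : ℂ | 0 < a.re} with hUdef
  have hUopen : IsOpen U := isOpen_lt continuous_const Complex.continuous_re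
  have hUconn : IsPreconnected U := (convex_halfSpace_re_gt 0).isPreconnected
  set f : ℂ → ℂ := fun a => ∫ t in Ioi (0:ℝ), (t:ℂ) ^ (s-1) * Complex.exp (-(a * t)) with hf
  set g : ℂ → ℂ := fun a => Complex.Gamma s * a ^ (-s) with hg
  have hfd : AnalyticOnNhd ℂ f U := by
    apply DifferentiableOn.analyticOnNhd ?_ hUopen
    exact fun x hx => (lips_hasDerivAt hs hx).differentiableAt.differentiableWithinAt
  have hgd : AnalyticOnNhd ℂ g U := by
    apply DifferentiableOn.analyticOnNhd ?_ hUopen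
    intro x hx
    apply DifferentiableAt.differentiableWithinAt
    exact (differentiableAt_id.cpow (differentiableAt_const _) (Or.inl hx)).const_mul _
  have h1U : (1:ℂ) ∈ U := by simp [hUdef]
  have hreal : ∀ r : ℝ, 0 < r → f r = g r := by
    intro r hr
    have := Complex.integral_cpow_mul_exp_neg_mul_Ioi (a := s) hs hr
    simp only [hf, hg]
    rw [show ((r:ℝ):ℂ) = ((r:ℂ)) by norm_num] at this ⊢
    rw [this]
    rw [mul_comm]
    congr 1
    rw [Complex.cpow_neg, one_div, Complex.inv_cpow]
    rw [Complex.arg_ofReal_of_nonneg hr.le]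
    exact pi_ne_zero.symm
  have hfreq : ∃ᶠ x in nhdsWithin 1 {(1:ℂ)}ᶜ, f x = g x := by
    have htend : Tendsto (fun n : ℕ => (1 + ((n:ℝ)+1)⁻¹ : ℂ)) atTop (nhdsWithin 1 {(1:ℂ)}ᶜ) := by
      apply tendsto_nhdsWithin_of_tendsto_nhds_of_eventually_within
      · have : Tendsto (fun n : ℕ => ((n:ℝ)+1)⁻¹) atTop (nhds 0) :=
          tendsto_one_div_add_atTop_nhds_zero_nat.congr (by simp [one_div])
        have h2 := (Complex.continuous_ofReal.tendsto 0).comp this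
        have := h2.const_add (1:ℂ)
        simpa using this
      · filter_upwards with n
        simp only [mem_compl_iff, mem_singleton_iff]
        intro h
        have h0 : ((((n:ℝ)+1)⁻¹ : ℝ) : ℂ) = 0 := by linear_combination h
        rw [Complex.ofReal_eq_zero, inv_eq_zero] at h0
        have : (0:ℝ) < (n:ℝ) + 1 := by positivity
        linarith
    apply htend.frequently
    apply Filter.Frequently.of_forall
    intro n
    have : (1 + ((n:ℝ)+1)⁻¹ : ℂ) = ((1 + ((n:ℝ)+1)⁻¹ : ℝ) : ℂ) := by push_cast; ring
    rw [this]
    apply hreal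
    positivity
  exact hfd.eqOn_of_preconnected_of_frequently_eq hgd hUconn h1U hfreq ha





/-- the one-sided function to which we apply Poisson summation -/
lemma lipsG_cont (hs : 1 < s.re) (hz : 0 < z.im) : Continuous (lipsG s z) := by
  rw [continuous_iff_continuousAt]
  intro x₀
  rcases lt_trichotomy x₀ 0 with h | h | h
  · -- locally zero
    have : lipsG s z =ᶠ[nhds x₀] (fun _ => 0) := by
      filter_upwards [eventually_lt_nhds h] with x hx
      exact Set.indicator_of_notMem (by simp [not_lt, hx.le]) _
    exact ContinuousAt.congr (continuousAt_const) this.symm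
  · -- at zero: squeeze
    subst h
    have hb : Tendsto (fun x : ℝ => |x| ^ (s.re - 1) * Real.exp (2 * Real.pi * z.im)) (nhds 0)
        (nhds 0) := by
      have h1 : Tendsto (fun x : ℝ => |x| ^ (s.re - 1)) (nhds 0) (nhds 0) := by
        have := (Real.continuousAt_rpow_const 0 (s.re - 1) (Or.inr (by linarith))).tendsto
        rw [Real.zero_rpow (ne_of_gt (by linarith : (0:ℝ) < s.re - 1))] at this
        exact this.comp (continuous_abs.tendsto' 0 0 (abs_zero))
      simpa using h1.mul_const _
    have hg0 : lipsG s z 0 = 0 := Set.indicator_of_notMem (by simp) _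
    rw [ContinuousAt, hg0]
    apply squeeze_zero_norm' ?_ hb
    filter_upwards [eventually_abs_sub_lt 0 (one_pos : (0:ℝ) < 1)] with x hx
    simp only [sub_zero] at hx
    by_cases hxpos : 0 < x
    · rw [lipsG, Set.indicator_of_mem (by exact hxpos)]
      rw [norm_mul,
        Complex.norm_cpow_eq_rpow_re_of_pos hxpos, Complex.norm_exp, sub_re, one_re]
      rw [abs_of_pos hxpos]
      have hre : (2 * Real.pi * Complex.I * z * x).re = -(2 * Real.pi * z.im * x) := by
        simp [Complex.mul_re, Complex.mul_im]
        try ring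
      rw [hre]
      apply mul_le_mul_of_nonneg_left ?_ (Real.rpow_nonneg hxpos.le _)
      apply Real.exp_le_exp.mpr
      have hx1 := abs_lt.mp hx
      nlinarith [mul_pos (mul_pos (two_pos (α := ℝ)) Real.pi_pos) hz,
        mul_nonneg (mul_nonneg (by positivity : (0:ℝ) ≤ 2*Real.pi) hz.le) hxpos.le]
    · rw [lipsG, Set.indicator_of_notMem (by simpa using hxpos)]
      simp
      positivity
  · have : lipsG s z =ᶠ[nhds x₀] (fun x : ℝ => (x:ℂ) ^ (s-1) * Complex.exp (2 * Real.pi * Complex.I * z * x)) := by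
      filter_upwards [eventually_gt_nhds h] with x hx
      exact Set.indicator_of_mem (by exact hx) _
    apply ContinuousAt.congr ?_ this.symm
    apply ContinuousAt.mul
    · apply ContinuousAt.cpow (Complex.continuous_ofReal.continuousAt) continuousAt_const
      exact Or.inl (by simpa using h)
    · exact (Complex.continuous_exp.comp (by continuity)).continuousAt



lemma lips_arg_pos {w : ℂ} (h : 0 < w.im) : 0 < Complex.arg w := by
  have h0 : Complex.arg w ≠ 0 := fun hh => by
    rw [Complex.arg_eq_zero_iff] at hh; linarith [hh.2]
  have h1 : 0 ≤ Complex.arg w := by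
    rw [Complex.arg_of_im_pos h]; exact Real.arccos_nonneg _
  exact lt_of_le_of_ne h1 (Ne.symm h0)

lemma lips_cpow_split (c : ℂ) {x y : ℂ} (hx : x ≠ 0) (hy : y ≠ 0)
    (h : Complex.arg x + Complex.arg y ∈ Set.Ioc (-Real.pi) Real.pi) :
    (x * y) ^ c = x ^ c * y ^ c := by
  rw [Complex.cpow_def_of_ne_zero (mul_ne_zero hx hy), Complex.cpow_def_of_ne_zero hx,
    Complex.cpow_def_of_ne_zero hy, ← Complex.exp_add, Complex.log_mul hx hy h, add_mul]

lemma lips_arg_neg : Complex.arg (-(2 * Real.pi * Complex.I)) = -(Real.pi / 2) := by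
  have : -(2 * Real.pi * Complex.I) = ((2 * Real.pi : ℝ) : ℂ) * (-Complex.I) := by
    push_cast; ring
  rw [this, Complex.arg_real_mul _ (by positivity), Complex.arg_neg_I]

lemma lips_split {s z : ℂ} (hz : 0 < z.im) :
    (-(2 * Real.pi * Complex.I) * z) ^ (-s) =
      (-(2 * Real.pi * Complex.I)) ^ (-s) * z ^ (-s) := by
  apply lips_cpow_split
  · simp [Real.pi_ne_zero, Complex.I_ne_zero]
  · intro h; rw [h] at hz; simp at hz
  · constructor
    · rw [lips_arg_neg]
      have := lips_arg_pos hz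
      have hπ := Real.pi_pos
      linarith
    · rw [lips_arg_neg]
      have := Complex.arg_le_pi z
      have hπ := Real.pi_pos
      linarith

lemma lips_norm_sum {s z : ℂ} (hs : 1 < s.re) (hz : 0 < z.im) :
    Summable (fun n : ℤ => ‖(z + (n:ℂ)) ^ (-s)‖) := by
  apply summable_of_isBigO (Real.summable_abs_int_rpow hs)
  rw [Asymptotics.isBigO_iff]
  refine ⟨Real.exp (Real.pi * |s.im|) * 2 ^ s.re, ?_⟩
  have hfin : {n : ℤ | ¬ (2 * ‖z‖ + 1 ≤ |(n:ℝ)|)}.Finite := by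
    apply Set.Finite.subset (Set.finite_Icc (-(⌈2 * ‖z‖ + 1⌉)) ⌈2 * ‖z‖ + 1⌉)
    intro n hn
    simp only [mem_setOf_eq, not_le] at hn
    have h1 : |(n:ℝ)| ≤ ⌈2 * ‖z‖ + 1⌉ := by
      calc |(n:ℝ)| ≤ 2 * ‖z‖ + 1 := hn.le
        _ ≤ ⌈2 * ‖z‖ + 1⌉ := Int.le_ceil _
    rw [← Int.cast_abs, Int.cast_le] at h1
    simp only [mem_Icc]
    exact ⟨neg_le_of_abs_le h1, le_of_abs_le h1⟩
  rw [Filter.eventually_cofinite]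
  apply hfin.subset
  intro n hn
  simp only [mem_setOf_eq, not_le] at hn ⊢
  by_contra hge
  push_neg at hge
  refine absurd hn (not_lt.mpr ?_)
  rw [norm_norm]
  -- main estimate
  have habs : |(n:ℝ)| = ‖(n:ℂ)‖ := by
    simp
  have hzn : z + (n:ℂ) ≠ 0 := fun h => by
    have : (z + (n:ℂ)).im = 0 := by rw [h]; simp
    simp at this; linarith
  have hlow : |(n:ℝ)| / 2 ≤ ‖z + n‖ := by
    have h1 : |(n:ℝ)| ≤ ‖z + n‖ + ‖z‖ := by
      rw [habs]
      calc ‖(n:ℂ)‖ = ‖(z + n) + (-z)‖ := by ring_nf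
        _ ≤ ‖z + n‖ + ‖-z‖ := norm_add_le _ _
        _ = ‖z + n‖ + ‖z‖ := by rw [norm_neg]
    linarith
  have hnpos : (0:ℝ) < |(n:ℝ)| := by
    have := norm_nonneg z
    linarith
  rw [Complex.norm_cpow_of_ne_zero hzn, neg_re, neg_im]
  rw [Real.norm_eq_abs, _root_.abs_of_nonneg (by positivity : (0:ℝ) ≤ |(n:ℝ)| ^ (-s.re))]
  rw [div_eq_mul_inv, ← Real.exp_neg]
  have hexp : Real.exp (-((z + ↑n).arg * -s.im)) ≤ Real.exp (Real.pi * |s.im|) := by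
    apply Real.exp_le_exp.mpr
    calc -((z + ↑n).arg * -s.im) = (z + ↑n).arg * s.im := by ring
      _ ≤ |(z + ↑n).arg * s.im| := le_abs_self _
      _ = |(z + ↑n).arg| * |s.im| := abs_mul _ _
      _ ≤ Real.pi * |s.im| := by
          apply mul_le_mul_of_nonneg_right (Complex.abs_arg_le_pi _) (abs_nonneg _)
  have hpow : ‖z + ↑n‖ ^ (-s.re) ≤ (|(n:ℝ)| / 2) ^ (-s.re) :=
    Real.rpow_le_rpow_of_nonpos (by linarith) hlow (by linarith)
  calc ‖z + ↑n‖ ^ (-s.re) * Real.exp (-((z + ↑n).arg * -s.im))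
      ≤ (|(n:ℝ)| / 2) ^ (-s.re) * Real.exp (Real.pi * |s.im|) := by
        apply mul_le_mul hpow hexp (Real.exp_pos _).le (by positivity)
    _ = Real.exp (Real.pi * |s.im|) * 2 ^ s.re * |(n:ℝ)| ^ (-s.re) := by
        rw [Real.div_rpow (abs_nonneg _) (by norm_num : (0:ℝ) ≤ 2)]
        rw [Real.rpow_neg (by norm_num : (0:ℝ) ≤ 2)]
        field_simp



lemma lips_re_aux (hz : 0 < z.im) (ξ : ℝ) : 0 < (2 * Real.pi * Complex.I * ((ξ:ℂ) - z)).re := by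
  simp [Complex.mul_re, Complex.mul_im]
  positivity

lemma lipsG_fourier (hs : 1 < s.re) (hz : 0 < z.im) (ξ : ℝ) :
    𝓕 (lipsG s z) ξ = Complex.Gamma s * (2 * Real.pi * Complex.I * ((ξ:ℂ) - z)) ^ (-s) := by
  rw [Real.fourier_real_eq_integral_exp_smul]
  have hptw : ∀ v : ℝ, Complex.exp (↑(-2 * Real.pi * v * ξ) * Complex.I) • lipsG s z v =
      Set.indicator (Ioi 0)
        (fun v : ℝ => (v:ℂ) ^ (s-1) * Complex.exp (-((2 * Real.pi * Complex.I * ((ξ:ℂ) - z)) * v))) v := by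
    intro v
    by_cases hv : v ∈ Ioi (0:ℝ)
    · rw [lipsG, Set.indicator_of_mem hv, Set.indicator_of_mem hv, smul_eq_mul]
      rw [show Complex.exp (↑(-2 * Real.pi * v * ξ) * Complex.I) *
          ((v:ℂ) ^ (s-1) * Complex.exp (2 * Real.pi * Complex.I * z * v)) =
          (v:ℂ) ^ (s-1) * (Complex.exp (↑(-2 * Real.pi * v * ξ) * Complex.I) *
            Complex.exp (2 * Real.pi * Complex.I * z * v)) by ring, ← Complex.exp_add]
      congr 2
      push_cast
      ring
    · rw [lipsG, Set.indicator_of_notMem hv, Set.indicator_of_notMem hv, smul_zero]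
  rw [show (∫ v : ℝ, Complex.exp (↑(-2 * Real.pi * v * ξ) * Complex.I) • lipsG s z v) =
      ∫ v : ℝ, Set.indicator (Ioi 0)
        (fun v : ℝ => (v:ℂ) ^ (s-1) * Complex.exp (-((2 * Real.pi * Complex.I * ((ξ:ℂ) - z)) * v))) v
    from integral_congr_ae (Filter.Eventually.of_forall hptw)]
  rw [integral_indicator measurableSet_Ioi]
  exact lips_key_int (by linarith) (lips_re_aux hz ξ)

lemma lipsG_decay (hs : 1 < s.re) (hz : 0 < z.im) :
    lipsG s z =O[cocompact ℝ] (fun x : ℝ => |x| ^ (-s.re)) := by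
  rw [cocompact_eq_atBot_atTop, Asymptotics.isBigO_sup]
  constructor
  · apply Asymptotics.IsBigO.congr' (Asymptotics.isBigO_zero _ _) ?_ EventuallyEq.rfl
    filter_upwards [Filter.eventually_lt_atBot (0:ℝ)] with x hx
    exact (Set.indicator_of_notMem (by simp [not_lt, hx.le]) _).symm
  · rw [Asymptotics.isBigO_iff]
    refine ⟨1, ?_⟩
    have htend := tendsto_rpow_mul_exp_neg_mul_atTop_nhds_zero (s.re - 1 + s.re)
      (2 * Real.pi * z.im) (by positivity)
    have hev : ∀ᶠ x : ℝ in atTop, x ^ (s.re - 1 + s.re) * Real.exp (-(2 * Real.pi * z.im) * x) ≤ 1 := by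
      filter_upwards [htend.eventually (eventually_le_nhds (by norm_num : (0:ℝ) < 1))] with x hx
      exact hx
    filter_upwards [hev, Filter.eventually_gt_atTop (0:ℝ)] with x hφ hx
    rw [lipsG, Set.indicator_of_mem (by exact hx)]
    rw [norm_mul,
      Complex.norm_cpow_eq_rpow_re_of_pos hx, Complex.norm_exp, sub_re, one_re]
    have hre : (2 * Real.pi * Complex.I * z * x).re = -(2 * Real.pi * z.im) * x := by
      simp [Complex.mul_re, Complex.mul_im]
      try ring
    rw [hre, one_mul]
    have key : x ^ (s.re - 1) * Real.exp (-(2 * Real.pi * z.im) * x) =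
        (x ^ (s.re - 1 + s.re) * Real.exp (-(2 * Real.pi * z.im) * x)) * x ^ (-s.re) := by
      rw [Real.rpow_add hx, Real.rpow_neg hx.le]
      field_simp
    rw [key, Real.norm_eq_abs, _root_.abs_of_nonneg (by positivity : (0:ℝ) ≤ |x| ^ (-s.re)), _root_.abs_of_pos hx]
    nlinarith [Real.rpow_nonneg hx.le (-s.re), Real.rpow_nonneg hx.le (s.re - 1 + s.re),
      Real.exp_pos (-(2 * Real.pi * z.im) * x)]




lemma lips_lhs_sum (hs : 1 < s.re) (hz : 0 < z.im) :
    Summable (fun n : ℕ+ => ‖((n:ℕ):ℂ) ^ (s - 1) / Complex.Gamma s * ee (((n:ℕ):ℂ) * z)‖) := by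
  have hnat : Summable (fun n : ℕ => ‖((n:ℕ):ℂ) ^ (s - 1) / Complex.Gamma s * ee (((n:ℕ):ℂ) * z)‖) := by
    set ρ : ℝ := Real.exp (-(2 * Real.pi * z.im)) with hρ
    have hρ1 : ‖ρ‖ < 1 := by
      rw [Real.norm_eq_abs, abs_of_pos (Real.exp_pos _)]
      rw [Real.exp_lt_one_iff]
      have := Real.pi_pos
      nlinarith
    set k : ℕ := ⌈s.re⌉₊ with hk
    have hsum : Summable (fun n : ℕ => ‖(Complex.Gamma s)⁻¹‖ * ((n:ℝ) ^ k * ρ ^ n)) :=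
      (summable_pow_mul_geometric_of_norm_lt_one k hρ1).mul_left _
    apply Summable.of_nonneg_of_le (fun n => norm_nonneg _) ?_ hsum
    · intro n
      rcases Nat.eq_zero_or_pos n with h0 | hpos
      · subst h0
        simp only [Nat.cast_zero]
        rw [Complex.zero_cpow (by
          intro h
          have : (s - 1).re = 0 := by rw [h]; simp
          rw [Complex.sub_re, Complex.one_re] at this
          linarith)]
        simp [norm_nonneg]
        positivity
      · have hn0 : (0:ℝ) < (n:ℝ) := by exact_mod_cast hpos
        rw [norm_mul, div_eq_mul_inv, norm_mul]
        have h1 : ‖((n:ℕ):ℂ) ^ (s - 1)‖ ≤ (n:ℝ) ^ k := by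
          rw [show (((n:ℕ):ℂ)) = (((n:ℝ)):ℂ) by norm_num,
            Complex.norm_cpow_eq_rpow_re_of_pos hn0, sub_re, one_re]
          calc (n:ℝ) ^ (s.re - 1) ≤ (n:ℝ) ^ (k:ℝ) := by
                apply Real.rpow_le_rpow_of_exponent_le (by exact_mod_cast hpos)
                have := Nat.le_ceil s.re
                linarith
            _ = (n:ℝ) ^ k := by rw [Real.rpow_natCast]
        have h2 : ‖ee (((n:ℕ):ℂ) * z)‖ = ρ ^ n := by
          rw [ee, Complex.norm_exp, hρ, ← Real.exp_nat_mul]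
          congr 1
          simp [Complex.mul_re, Complex.mul_im]
          ring
        rw [h2]
        calc ‖((n:ℕ):ℂ) ^ (s - 1)‖ * ‖(Complex.Gamma s)⁻¹‖ * ρ ^ n
            ≤ (n:ℝ) ^ k * ‖(Complex.Gamma s)⁻¹‖ * ρ ^ n := by
              apply mul_le_mul_of_nonneg_right (mul_le_mul_of_nonneg_right h1 (norm_nonneg _))
                (pow_nonneg (Real.exp_pos _).le n)
          _ = ‖(Complex.Gamma s)⁻¹‖ * ((n:ℝ) ^ k * ρ ^ n) := by ring
  exact hnat.comp_injective (fun a b h => PNat.coe_injective (by exact_mod_cast h))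





end LipschitzAux

section LipschitzMain
open MeasureTheory Set Complex Filter Real Metric FourierTransform

/-- Lipschitz summation formula: for `Re(s) > 1` and `z` in the upper half plane,
`Σ_{n ≥ 1} (n^{s-1}/Γ(s)) e(nz) = Σ_{n ∈ ℤ} (-2πi)^{-s} (z+n)^{-s}`, both series
converging absolutely (powers via the principal branch of the logarithm). -/
theorem stmt4 (s : ℂ) (hs : 1 < s.re) (z : ℂ) (hz : 0 < z.im) :
    Summable (fun n : ℕ+ => ‖((n : ℕ) : ℂ) ^ (s - 1) / Complex.Gamma s * ee (((n : ℕ) : ℂ) * z)‖) ∧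
    Summable (fun n : ℤ => ‖(-(2 * Real.pi * Complex.I)) ^ (-s) * (z + (n : ℂ)) ^ (-s)‖) ∧
    ∑' n : ℕ+, ((n : ℕ) : ℂ) ^ (s - 1) / Complex.Gamma s * ee (((n : ℕ) : ℂ) * z) =
      ∑' n : ℤ, (-(2 * Real.pi * Complex.I)) ^ (-s) * (z + (n : ℂ)) ^ (-s) := by
  have hΓ : Complex.Gamma s ≠ 0 := by
    apply Complex.Gamma_ne_zero
    intro m hm
    rw [hm] at hs
    simp only [Complex.neg_re, Complex.natCast_re] at hs
    have : (0:ℝ) ≤ (m:ℝ) := Nat.cast_nonneg m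
    linarith
  have hneg : Summable (fun n : ℤ => ‖(z - (n:ℂ)) ^ (-s)‖) := by
    have h1 := (lips_norm_sum hs hz).comp_injective (Equiv.neg ℤ).injective
    apply Summable.congr h1
    intro n
    simp only [Function.comp_apply, Equiv.neg_apply]
    push_cast
    rw [sub_eq_add_neg]
  have himn : ∀ n : ℤ, (0:ℝ) < (z + (n:ℂ)).im := fun n => by simp [hz]
  have himn' : ∀ n : ℤ, (0:ℝ) < (z - (n:ℂ)).im := fun n => by simp [hz]
  refine ⟨lips_lhs_sum hs hz, ?_, ?_⟩
  · simp_rw [norm_mul]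
    exact (lips_norm_sum hs hz).mul_left _
  · -- main equality
    have hFsummable : Summable (fun n : ℤ => 𝓕 (lipsG s z) n) := by
      apply Summable.of_norm
      apply Summable.congr (((hneg.mul_left ‖(-(2 * Real.pi * Complex.I)) ^ (-s)‖).mul_left
        ‖Complex.Gamma s‖))
      intro n
      rw [lipsG_fourier hs hz]
      rw [show 2 * (Real.pi:ℂ) * Complex.I * (((n:ℤ):ℝ) - z) = -(2 * Real.pi * Complex.I) * (z - (n:ℂ)) by push_cast; ring]
      rw [lips_split (himn' n)]
      simp only [norm_mul]
      try ring
    have hpoisson := Real.tsum_eq_tsum_fourier_of_rpow_decay_of_summable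
      (lipsG_cont hs hz) hs (lipsG_decay hs hz) hFsummable 0
    simp only [zero_add, QuotientAddGroup.mk_zero, fourier_eval_zero, mul_one] at hpoisson
    -- LHS = Γ⁻¹ * ∑'ℤ lipsG
    have hLHS : ∑' n : ℕ+, ((n : ℕ) : ℂ) ^ (s - 1) / Complex.Gamma s * ee (((n : ℕ) : ℂ) * z)
        = (Complex.Gamma s)⁻¹ * ∑' n : ℤ, lipsG s z n := by
      have hinj : Function.Injective (fun n : ℕ+ => (n : ℤ)) := by
        intro a b h
        simp only at h
        exact PNat.coe_injective (by exact_mod_cast h)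
      have hsupp : Function.support (fun n : ℤ => lipsG s z (n:ℝ)) ⊆
          Set.range (fun n : ℕ+ => (n : ℤ)) := by
        intro n hn
        simp only [Function.mem_support] at hn
        have hn0 : (0:ℝ) < (n:ℝ) := by
          by_contra hc
          exact hn (Set.indicator_of_notMem (by simpa using hc) _)
        have : 0 < n := by exact_mod_cast hn0
        exact ⟨⟨n.toNat, by omega⟩, by simp; omega⟩
      rw [← Function.Injective.tsum_eq hinj hsupp]
      rw [← tsum_mul_left (a := (Complex.Gamma s)⁻¹)]
      apply tsum_congr
      intro n
      have hn0 : (0:ℝ) < (((n:ℤ)):ℝ) := Int.cast_pos.mpr (by exact_mod_cast n.pos)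
      rw [lipsG, Set.indicator_of_mem (Set.mem_Ioi.mpr hn0)]
      rw [ee, div_eq_mul_inv]
      push_cast
      rw [show 2 * (Real.pi:ℂ) * Complex.I * z * ((n:ℕ):ℂ) = 2 * Real.pi * Complex.I * (((n:ℕ):ℂ) * z) by ring]
      ring
    -- RHS: reindex and split
    have hRHS : ∑' n : ℤ, 𝓕 (lipsG s z) n
        = Complex.Gamma s * ∑' n : ℤ, (-(2 * Real.pi * Complex.I)) ^ (-s) * (z + (n : ℂ)) ^ (-s) := by
      rw [← (Equiv.neg ℤ).tsum_eq (fun n : ℤ => 𝓕 (lipsG s z) n)]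
      rw [← tsum_mul_left (a := Complex.Gamma s)]
      apply tsum_congr
      intro n
      simp only [Equiv.neg_apply]
      rw [lipsG_fourier hs hz]
      rw [show 2 * (Real.pi:ℂ) * Complex.I * ((((-n:ℤ)):ℝ) - z) = -(2 * Real.pi * Complex.I) * (z + (n:ℂ)) by push_cast; ring]
      rw [lips_split (himn n)]
      try ring
    rw [hLHS, hpoisson, hRHS, ← mul_assoc, inv_mul_cancel₀ hΓ, one_mul]

end LipschitzMain
end

section
/- For z in the upper half plane, Σ_{n=1}^∞ e(nz) = -1/2 + lim_{K→∞} Σ_{n ∈ ℤ, -K < n < K} (-2πi)^{-1} (z+n)^{-1}, where e(z) = exp(2πi z). -/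
open Real Complex Filter Finset intervalIntegral
open scoped Topology

namespace Stmt5Proof

lemma norm_sin_le (w : ℂ) : ‖Complex.sin w‖ ≤ Real.exp ‖w‖ := by
  rw [Complex.sin]
  have h1 : ‖(Complex.exp (-w * I) - Complex.exp (w * I)) * I / 2‖
      = ‖Complex.exp (-w * I) - Complex.exp (w * I)‖ / 2 := by
    rw [norm_div, norm_mul]; simp
  rw [h1]
  have h2 : ∀ u : ℂ, ‖u‖ = ‖w‖ → ‖Complex.exp u‖ ≤ Real.exp ‖w‖ := by
    intro u hu
    rw [Complex.norm_exp]
    exact Real.exp_le_exp.2 (hu ▸ Complex.re_le_norm u)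
  have h3 : ‖Complex.exp (-w * I) - Complex.exp (w * I)‖ ≤ Real.exp ‖w‖ + Real.exp ‖w‖ := by
    refine (norm_sub_le _ _).trans (add_le_add (h2 _ ?_) (h2 _ ?_)) <;> simp
  linarith

lemma term_ne_zero {z : ℂ} (hz : z.im ≠ 0) (j : ℕ) :
    (1 : ℂ) - z ^ 2 / ((j : ℂ) + 1) ^ 2 ≠ 0 := by
  have hc : ((j : ℂ) + 1) ≠ 0 := Nat.cast_add_one_ne_zero j
  intro h
  have h2 : z ^ 2 = ((j : ℂ) + 1) ^ 2 := by
    field_simp at h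
    linear_combination -h
  have h3 : (z - ((j : ℂ) + 1)) * (z + ((j : ℂ) + 1)) = 0 := by linear_combination h2
  rcases mul_eq_zero.1 h3 with h4 | h4
  · apply hz
    have : z = (j : ℂ) + 1 := by linear_combination h4
    rw [this]; simp
  · apply hz
    have : z = -((j : ℂ) + 1) := by linear_combination h4
    rw [this]; simp

lemma denom_ne_zero {z : ℂ} (hz : z.im ≠ 0) (j : ℕ) :
    z ^ 2 - ((j : ℂ) + 1) ^ 2 ≠ 0 := by
  have hc : ((j : ℂ) + 1) ≠ 0 := Nat.cast_add_one_ne_zero j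
  intro h
  apply term_ne_zero hz j
  have h2 : z ^ 2 = ((j : ℂ) + 1) ^ 2 := by linear_combination h
  rw [h2]
  field_simp
  norm_num

lemma sin_pi_ne_zero {z : ℂ} (hz : z.im ≠ 0) : Complex.sin ((π : ℂ) * z) ≠ 0 := by
  rw [Ne, Complex.sin_eq_zero_iff]
  rintro ⟨k, hk⟩
  have hπ : (π : ℂ) ≠ 0 := Complex.ofReal_ne_zero.2 pi_ne_zero
  have hzk : z = (k : ℂ) := by
    apply mul_left_cancel₀ hπ
    rw [hk]; ring
  apply hz; rw [hzk]; simp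


lemma term_differentiable (j : ℕ) (t : ℂ) :
    DifferentiableAt ℂ (fun t : ℂ => 1 - t ^ 2 / ((j : ℂ) + 1) ^ 2) t :=
  (differentiableAt_const _).sub ((differentiableAt_pow 2).div_const _)

lemma logDeriv_term {z : ℂ} (hz : z.im ≠ 0) (j : ℕ) :
    logDeriv (fun t : ℂ => 1 - t ^ 2 / ((j : ℂ) + 1) ^ 2) z
      = 2 * z / (z ^ 2 - ((j : ℂ) + 1) ^ 2) := by
  have hc : ((j : ℂ) + 1) ≠ 0 := Nat.cast_add_one_ne_zero j
  have hd : HasDerivAt (fun t : ℂ => 1 - t ^ 2 / ((j : ℂ) + 1) ^ 2)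
      (-(2 * z / ((j : ℂ) + 1) ^ 2)) z := by
    have h := ((hasDerivAt_pow 2 z).div_const (((j : ℂ) + 1) ^ 2)).const_sub 1
    exact h.congr_deriv (by norm_num)
  rw [logDeriv_apply, hd.deriv]
  have h1 := term_ne_zero hz j
  have h2 := denom_ne_zero hz j
  rw [div_eq_div_iff h1 h2]
  field_simp
  ring

lemma logDeriv_F {z : ℂ} (hz : z.im ≠ 0) (n : ℕ) :
    logDeriv (fun t : ℂ => (π : ℂ) * t * ∏ j ∈ range n, (1 - t ^ 2 / ((j : ℂ) + 1) ^ 2)) z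
      = 1 / z + ∑ j ∈ range n, 2 * z / (z ^ 2 - ((j : ℂ) + 1) ^ 2) := by
  have hπ : (π : ℂ) ≠ 0 := Complex.ofReal_ne_zero.2 pi_ne_zero
  have hz0 : z ≠ 0 := fun h => hz (by simp [h])
  rw [logDeriv_mul z (mul_ne_zero hπ hz0)
      (Finset.prod_ne_zero_iff.2 fun j _ => term_ne_zero hz j)
      ((differentiableAt_const _).mul differentiableAt_fun_id)
      (DifferentiableAt.fun_finsetProd fun j _ => term_differentiable j z),
    logDeriv_prod (fun j _ => term_ne_zero hz j) (fun j _ => term_differentiable j z),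
    logDeriv_const_mul z _ hπ, logDeriv_id']
  exact congrArg _ (Finset.sum_congr rfl fun j _ => logDeriv_term hz j)


lemma tendsto_rho : Filter.Tendsto (fun n : ℕ =>
    (∫ x in (0:ℝ)..π/2, Real.cos x ^ (2*n) * x) / (∫ x in (0:ℝ)..π/2, Real.cos x ^ (2*n)))
    Filter.atTop (nhds 0) := by
  have h := EulerSine.tendsto_integral_cos_pow_mul_div (f := fun x : ℝ => (x : ℂ))
    Complex.continuous_ofReal.continuousOn
  have h2 := h.comp (tendsto_id.const_mul_atTop' (zero_lt_two) :
    Filter.Tendsto (fun n : ℕ => 2 * n) atTop atTop)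
  have h5 : Filter.Tendsto (fun n : ℕ => ((((∫ x in (0:ℝ)..π/2, Real.cos x ^ (2*n) * x) /
      (∫ x in (0:ℝ)..π/2, Real.cos x ^ (2*n)) : ℝ)) : ℂ)) atTop (nhds 0) := by
    have key : ∀ n : ℕ, ((fun n : ℕ => (∫ x in (0:ℝ)..π/2, (Real.cos x : ℂ) ^ n * (x:ℂ)) /
        ((∫ x in (0:ℝ)..π/2, Real.cos x ^ n : ℝ) : ℂ)) ∘ fun x => 2 * x) n
        = ((((∫ x in (0:ℝ)..π/2, Real.cos x ^ (2*n) * x) /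
          (∫ x in (0:ℝ)..π/2, Real.cos x ^ (2*n)) : ℝ)) : ℂ) := by
      intro n
      simp only [Function.comp_apply, Complex.ofReal_div]
      congr 1
      rw [← intervalIntegral.integral_ofReal]
      apply intervalIntegral.integral_congr
      intro x _
      push_cast
      rfl
    have h0 : ((0:ℝ) : ℂ) = (0:ℂ) := by simp
    rw [h0] at h2
    exact h2.congr key
  have := (Complex.continuous_re.tendsto 0).comp h5
  simpa [Function.comp_def] using this


/-- MVT bound for `cos(2tx) - 1`. -/
lemma cos_sub_one_bound {R : ℝ} (hR : 0 < R) {t : ℂ} (ht : ‖t‖ ≤ R) {x : ℝ}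
    (hx : x ∈ Set.Icc 0 (π/2)) :
    ‖Complex.cos (2 * t * x) - 1‖ ≤ 2 * R * Real.exp (π * R) * x := by
  set f : ℝ → ℂ := fun u => Complex.cos (2 * t * u)
  set f' : ℝ → ℂ := fun u => -Complex.sin (2 * t * u) * (2 * t)
  have hder : ∀ u ∈ Set.Icc (0:ℝ) (π/2), HasDerivWithinAt f (f' u) (Set.Icc 0 (π/2)) u := by
    intro u _
    have a : HasDerivAt (fun y : ℂ => 2 * t * y) (2 * t) (u:ℂ) := by
      simpa using (hasDerivAt_id (u:ℂ)).const_mul (2*t)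
    have b := (Complex.hasDerivAt_cos (2 * t * u)).comp (u:ℂ) a
    have c := b.comp_ofReal
    exact c.hasDerivWithinAt
  have hbound : ∀ u ∈ Set.Ico (0:ℝ) (π/2), ‖f' u‖ ≤ 2 * R * Real.exp (π * R) := by
    intro u hu
    have h1 : ‖f' u‖ = ‖Complex.sin (2*t*u)‖ * (2 * ‖t‖) := by
      simp only [f', norm_mul, norm_neg]
      rw [show ‖(2:ℂ)‖ = 2 by norm_num]
    rw [h1]
    have h2 : ‖Complex.sin (2*t*u)‖ ≤ Real.exp (π * R) := by
      refine (norm_sin_le _).trans (Real.exp_le_exp.2 ?_)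
      have huu : ‖(2 : ℂ) * t * (u:ℂ)‖ = 2 * ‖t‖ * u := by
        rw [norm_mul, norm_mul, Complex.norm_real, Real.norm_eq_abs, _root_.abs_of_nonneg hu.1]
        simp
      rw [huu]
      have hu2 : u ≤ π/2 := hu.2.le
      nlinarith [norm_nonneg t, hu.1, pi_pos]
    have := mul_le_mul h2 (by linarith : 2 * ‖t‖ ≤ 2 * R) (by positivity) (by positivity)
    linarith [this]
  have key := norm_image_sub_le_of_norm_deriv_le_segment' hder hbound x hx
  have hf0 : f 0 = 1 := by simp [f]
  rw [hf0] at key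
  simpa using key


lemma hsumB : Summable (fun j : ℕ => 1 / ((j:ℝ)+1)^2) := by
  have h := Real.summable_one_div_nat_pow.mpr (one_lt_two)
  have h2 := (summable_nat_add_iff 1).mpr h
  apply h2.congr
  intro j
  push_cast
  rfl

noncomputable def B : ℝ := ∑' j : ℕ, 1 / ((j:ℝ)+1)^2

lemma norm_F_le {R : ℝ} (hR : 0 < R) {t : ℂ} (ht : ‖t‖ ≤ R) (n : ℕ) :
    ‖(π:ℂ) * t * ∏ j ∈ range n, (1 - t ^ 2 / ((j:ℂ)+1)^2)‖ ≤ π * R * Real.exp (R^2 * B) := by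
  rw [norm_mul, norm_mul, Complex.norm_real, Real.norm_eq_abs, abs_of_pos pi_pos]
  have h1 : ‖∏ j ∈ range n, (1 - t ^ 2 / ((j:ℂ)+1)^2)‖ ≤ Real.exp (R^2 * B) := by
    refine (Finset.norm_prod_le _ _).trans ?_
    have hterm : ∀ j ∈ range n, ‖(1 : ℂ) - t ^ 2 / ((j:ℂ)+1)^2‖ ≤
        Real.exp (R^2 * (1 / ((j:ℝ)+1)^2)) := by
      intro j _
      have hc : ‖((j:ℂ)+1)^2‖ = ((j:ℝ)+1)^2 := by
        rw [norm_pow]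
        congr 1
        rw [show ((j:ℂ)+1) = (((j:ℝ)+1 : ℝ) : ℂ) by push_cast; ring, Complex.norm_real,
          Real.norm_eq_abs, _root_.abs_of_pos (by positivity)]
      have h2 : ‖(1 : ℂ) - t ^ 2 / ((j:ℂ)+1)^2‖ ≤ 1 + R^2 / ((j:ℝ)+1)^2 := by
        refine (norm_sub_le _ _).trans ?_
        rw [norm_one, norm_div, hc, norm_pow]
        gcongr
      refine h2.trans ?_
      have := Real.add_one_le_exp (R^2 * (1 / ((j:ℝ)+1)^2))
      have heq : R^2 * (1 / ((j:ℝ)+1)^2) = R^2 / ((j:ℝ)+1)^2 := by ring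
      linarith [this, heq ▸ this]
    refine (Finset.prod_le_prod (fun j _ => norm_nonneg _) hterm).trans ?_
    rw [← Real.exp_sum]
    apply Real.exp_le_exp.2
    rw [← Finset.mul_sum]
    have : ∑ j ∈ range n, 1 / ((j:ℝ)+1)^2 ≤ B :=
      Summable.sum_le_tsum (range n) (fun j _ => by positivity) hsumB
    nlinarith [sq_nonneg R]
  have h2 : π * ‖t‖ ≤ π * R := by nlinarith [pi_pos]
  have h3 : (0:ℝ) ≤ π * ‖t‖ := by positivity
  nlinarith [norm_nonneg (∏ j ∈ range n, (1 - t ^ 2 / ((j:ℂ)+1)^2)), Real.exp_pos (R^2*B)]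


lemma A_sub_C_bound {R : ℝ} (hR : 0 < R) {t : ℂ} (ht : ‖t‖ ≤ R) (n : ℕ) :
    ‖(∫ x in (0:ℝ)..π/2, Complex.cos (2 * t * x) * (Real.cos x : ℂ) ^ (2*n)) -
      ((∫ x in (0:ℝ)..π/2, Real.cos x ^ (2*n) : ℝ) : ℂ)‖ ≤
      2 * R * Real.exp (π * R) * (∫ x in (0:ℝ)..π/2, Real.cos x ^ (2*n) * x) := by
  set M := 2 * R * Real.exp (π * R) with hM
  have hMpos : 0 < M := by positivity
  have hcont1 : Continuous fun x : ℝ => Complex.cos (2 * t * x) * (Real.cos x : ℂ) ^ (2*n) :=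
    (Complex.continuous_cos.comp (continuous_const.mul Complex.continuous_ofReal)).mul
      ((Complex.continuous_ofReal.comp Real.continuous_cos).pow _)
  have hcont2 : Continuous fun x : ℝ => (Real.cos x : ℂ) ^ (2*n) :=
    (Complex.continuous_ofReal.comp Real.continuous_cos).pow _
  have hC : ((∫ x in (0:ℝ)..π/2, Real.cos x ^ (2*n) : ℝ) : ℂ)
      = ∫ x in (0:ℝ)..π/2, (Real.cos x : ℂ) ^ (2*n) := by
    rw [← intervalIntegral.integral_ofReal]
    apply intervalIntegral.integral_congr
    intro x _
    push_cast
    rfl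
  rw [hC, ← intervalIntegral.integral_sub (hcont1.intervalIntegrable _ _)
    (hcont2.intervalIntegrable _ _)]
  have hker : ∀ x : ℝ, Complex.cos (2 * t * x) * (Real.cos x : ℂ) ^ (2*n) -
      (Real.cos x : ℂ) ^ (2*n) = (Complex.cos (2 * t * x) - 1) * (Real.cos x : ℂ) ^ (2*n) := by
    intro x; ring
  have hbnd : ‖∫ x in (0:ℝ)..π/2, (Complex.cos (2 * t * x) * (Real.cos x : ℂ) ^ (2*n) -
      (Real.cos x : ℂ) ^ (2*n))‖ ≤ |∫ x in (0:ℝ)..π/2, M * (Real.cos x ^ (2*n) * x)| := by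
    apply intervalIntegral.norm_integral_le_abs_of_norm_le
    · rw [Set.uIoc_of_le (by positivity : (0:ℝ) ≤ π/2)]
      filter_upwards [MeasureTheory.ae_restrict_mem measurableSet_Ioc] with x hx
      rw [hker x, norm_mul]
      have hxmem : x ∈ Set.Icc (0:ℝ) (π/2) := ⟨hx.1.le, hx.2⟩
      have h1 := cos_sub_one_bound hR ht hxmem
      have h2 : ‖(Real.cos x : ℂ) ^ (2*n)‖ = Real.cos x ^ (2*n) := by
        rw [norm_pow, Complex.norm_real, Real.norm_eq_abs,
          _root_.abs_of_nonneg (Real.cos_nonneg_of_mem_Icc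
            ⟨by linarith [hxmem.1, pi_pos], hxmem.2⟩)]
      rw [h2]
      have hcosn : (0:ℝ) ≤ Real.cos x ^ (2*n) := by
        have := Real.cos_nonneg_of_mem_Icc (⟨by linarith [hxmem.1, pi_pos], hxmem.2⟩ :
          x ∈ Set.Icc (-(π/2)) (π/2))
        positivity
      calc ‖Complex.cos (2 * t * ↑x) - 1‖ * Real.cos x ^ (2*n)
          ≤ (M * x) * Real.cos x ^ (2*n) := by
            apply mul_le_mul_of_nonneg_right h1 hcosn
        _ = M * (Real.cos x ^ (2*n) * x) := by ring
    · exact (continuous_const.mul ((Real.continuous_cos.pow _).mul continuous_id)).intervalIntegrable _ _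
  refine hbnd.trans ?_
  rw [intervalIntegral.integral_const_mul, abs_mul, _root_.abs_of_pos hMpos]
  have hnum : 0 ≤ ∫ x in (0:ℝ)..π/2, Real.cos x ^ (2*n) * x := by
    apply intervalIntegral.integral_nonneg (by positivity : (0:ℝ) ≤ π/2)
    intro x hx
    have := Real.cos_nonneg_of_mem_Icc (⟨by linarith [hx.1, pi_pos], hx.2⟩ :
      x ∈ Set.Icc (-(π/2)) (π/2))
    have := hx.1
    positivity
  rw [_root_.abs_of_nonneg hnum]


lemma tendstoUniformlyOn_sine_prod {R : ℝ} (hR : 0 < R) :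
    TendstoUniformlyOn
      (fun n (t : ℂ) => (π:ℂ) * t * ∏ j ∈ range n, (1 - t ^ 2 / ((j:ℂ)+1)^2))
      (fun t => Complex.sin ((π:ℂ) * t)) atTop (Metric.closedBall 0 R) := by
  set Mb := π * R * Real.exp (R^2 * B) with hMb
  set M := 2 * R * Real.exp (π * R) with hM
  have hMbpos : 0 < Mb := by positivity
  have hMpos : 0 < M := by positivity
  set ρ : ℕ → ℝ := fun n => (∫ x in (0:ℝ)..π/2, Real.cos x ^ (2*n) * x) /
    (∫ x in (0:ℝ)..π/2, Real.cos x ^ (2*n)) with hρ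
  have key : ∀ n : ℕ, ∀ t ∈ Metric.closedBall (0:ℂ) R,
      ‖Complex.sin ((π:ℂ) * t) - (π:ℂ) * t * ∏ j ∈ range n, (1 - t ^ 2 / ((j:ℂ)+1)^2)‖
        ≤ Mb * M * ρ n := by
    intro n t htt
    have ht : ‖t‖ ≤ R := by simpa [Complex.dist_eq] using htt
    set F := (π:ℂ) * t * ∏ j ∈ range n, (1 - t ^ 2 / ((j:ℂ)+1)^2) with hF
    set A := ∫ x in (0:ℝ)..π/2, Complex.cos (2 * t * x) * (Real.cos x : ℂ) ^ (2*n) with hA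
    set C := ∫ x in (0:ℝ)..π/2, Real.cos x ^ (2*n) with hC
    have hCpos : 0 < C := EulerSine.integral_cos_pow_pos _
    have hCne : (C:ℂ) ≠ 0 := Complex.ofReal_ne_zero.2 hCpos.ne'
    have hid : Complex.sin ((π:ℂ) * t) = F * A / (C:ℂ) := EulerSine.sin_pi_mul_eq t n
    have hdiff : Complex.sin ((π:ℂ) * t) - F = F * (A - (C:ℂ)) / (C:ℂ) := by
      rw [hid]
      field_simp
    rw [hdiff, norm_div, norm_mul]
    have hnormC : ‖(C:ℂ)‖ = C := by
      rw [Complex.norm_real, Real.norm_eq_abs, _root_.abs_of_pos hCpos]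
    rw [hnormC]
    have h1 : ‖F‖ ≤ Mb := norm_F_le hR ht n
    have h2 : ‖A - (C:ℂ)‖ ≤ M * (∫ x in (0:ℝ)..π/2, Real.cos x ^ (2*n) * x) :=
      A_sub_C_bound hR ht n
    have hnum : 0 ≤ ∫ x in (0:ℝ)..π/2, Real.cos x ^ (2*n) * x := by
      apply intervalIntegral.integral_nonneg (by positivity : (0:ℝ) ≤ π/2)
      intro x hx
      have := Real.cos_nonneg_of_mem_Icc (⟨by linarith [hx.1, pi_pos], hx.2⟩ :
        x ∈ Set.Icc (-(π/2)) (π/2))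
      have := hx.1
      positivity
    have : ‖F‖ * ‖A - (C:ℂ)‖ ≤ Mb * (M * (∫ x in (0:ℝ)..π/2, Real.cos x ^ (2*n) * x)) := by
      apply mul_le_mul h1 h2 (norm_nonneg _) hMbpos.le
    calc ‖F‖ * ‖A - (C:ℂ)‖ / C
        ≤ Mb * (M * (∫ x in (0:ℝ)..π/2, Real.cos x ^ (2*n) * x)) / C := by
          exact (div_le_div_iff_of_pos_right hCpos).mpr this
      _ = Mb * M * ρ n := by simp only [hρ, ← hC]; ring
  rw [Metric.tendstoUniformlyOn_iff]
  intro ε hε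
  have hlim : Filter.Tendsto (fun n => Mb * M * ρ n) atTop (nhds 0) := by
    have := tendsto_rho.const_mul (Mb * M)
    simpa using this
  have hev : ∀ᶠ n in atTop, Mb * M * ρ n < ε :=
    hlim.eventually (eventually_lt_nhds hε)
  filter_upwards [hev] with n hn t ht
  rw [dist_eq_norm]
  exact lt_of_le_of_lt (key n t ht) hn


lemma tendsto_cot_sum {z : ℂ} (hz : z.im ≠ 0) :
    Filter.Tendsto (fun n : ℕ => 1 / z + ∑ j ∈ range n, 2 * z / (z ^ 2 - ((j:ℂ)+1)^2))
      atTop (nhds ((π:ℂ) * Complex.cot ((π:ℂ) * z))) := by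
  set R : ℝ := ‖z‖ + 1 with hRdef
  have hR : 0 < R := by positivity
  have hmem : z ∈ Metric.ball (0:ℂ) R := by
    simp [Complex.dist_eq, hRdef]
  have hball : Metric.ball (0:ℂ) R ⊆ Metric.closedBall (0:ℂ) R := Metric.ball_subset_closedBall
  have hUnif : TendstoLocallyUniformlyOn
      (fun n (t : ℂ) => (π:ℂ) * t * ∏ j ∈ range n, (1 - t ^ 2 / ((j:ℂ)+1)^2))
      (fun t => Complex.sin ((π:ℂ) * t)) atTop (Metric.ball 0 R) :=
    ((tendstoUniformlyOn_sine_prod hR).tendstoLocallyUniformlyOn).mono hball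
  have hdiff : ∀ᶠ n : ℕ in atTop, DifferentiableOn ℂ
      (fun t : ℂ => (π:ℂ) * t * ∏ j ∈ range n, (1 - t ^ 2 / ((j:ℂ)+1)^2))
      (Metric.ball 0 R) := by
    apply Filter.Eventually.of_forall
    intro n t _
    exact (((differentiableAt_const _).mul differentiableAt_fun_id).mul
      (DifferentiableAt.fun_finsetProd fun j _ => term_differentiable j t)).differentiableWithinAt
  have hne : Complex.sin ((π:ℂ) * z) ≠ 0 := sin_pi_ne_zero hz
  have hmain := Complex.logDeriv_tendsto
    (f := fun n (t : ℂ) => (π:ℂ) * t * ∏ j ∈ range n, (1 - t ^ 2 / ((j:ℂ)+1)^2))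
    (g := fun t => Complex.sin ((π:ℂ) * t)) Metric.isOpen_ball hmem hUnif hdiff hne
  have hld : logDeriv (fun t => Complex.sin ((π:ℂ) * t)) z = (π:ℂ) * Complex.cot ((π:ℂ) * z) := by
    have h1 : (fun t : ℂ => Complex.sin ((π:ℂ) * t)) = Complex.sin ∘ (fun t : ℂ => (π:ℂ) * t) := rfl
    rw [h1, logDeriv_comp (g := fun t : ℂ => (π:ℂ) * t) (Complex.differentiable_sin _) (by fun_prop)]
    have h2 : deriv (fun t : ℂ => (π:ℂ) * t) z = (π:ℂ) := by
      simpa using ((hasDerivAt_id z).const_mul (π:ℂ)).deriv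
    rw [h2, logDeriv]
    simp only [Pi.div_apply, Complex.deriv_sin]
    rw [Complex.cot]
    ring
  rw [hld] at hmain
  exact hmain.congr fun n => logDeriv_F hz n


lemma add_real_ne_zero {z : ℂ} (hz : z.im ≠ 0) (r : ℝ) : z + (r:ℂ) ≠ 0 := by
  intro h
  apply hz
  have := congrArg Complex.im h
  simpa using this

lemma sum_Ioo_eq {z : ℂ} (hz : z.im ≠ 0) (n : ℕ) :
    ∑ m ∈ Finset.Ioo (-((n+1 : ℕ) : ℤ)) ((n+1 : ℕ) : ℤ), (z + (m : ℂ))⁻¹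
      = 1 / z + ∑ j ∈ range n, 2 * z / (z ^ 2 - ((j:ℂ)+1)^2) := by
  induction n with
  | zero =>
    have h : Finset.Ioo (-((1:ℕ) : ℤ)) ((1:ℕ) : ℤ) = {0} := by decide
    rw [h]
    simp [one_div]
  | succ n ih =>
    have hstep : Finset.Ioo (-((n+2 : ℕ) : ℤ)) ((n+2 : ℕ) : ℤ)
        = insert (-((n+1 : ℕ) : ℤ)) (insert ((n+1 : ℕ) : ℤ)
            (Finset.Ioo (-((n+1 : ℕ) : ℤ)) ((n+1 : ℕ) : ℤ))) := by
      ext m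
      simp only [Finset.mem_Ioo, Finset.mem_insert]
      omega
    have h1 : (-((n+1 : ℕ) : ℤ)) ∉ insert ((n+1 : ℕ) : ℤ)
        (Finset.Ioo (-((n+1 : ℕ) : ℤ)) ((n+1 : ℕ) : ℤ)) := by
      simp only [Finset.mem_insert, Finset.mem_Ioo]
      omega
    have h2 : ((n+1 : ℕ) : ℤ) ∉ Finset.Ioo (-((n+1 : ℕ) : ℤ)) ((n+1 : ℕ) : ℤ) := by
      simp only [Finset.mem_Ioo]
      omega
    rw [hstep, Finset.sum_insert h1, Finset.sum_insert h2, ih, Finset.sum_range_succ]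
    have ha : z - ((n:ℂ)+1) ≠ 0 := by
      intro h
      apply hz
      have := congrArg Complex.im h
      simpa using this
    have hb : z + ((n:ℂ)+1) ≠ 0 := by
      intro h
      apply hz
      have := congrArg Complex.im h
      simpa using this
    have hd : z ^ 2 - ((n:ℂ)+1)^2 ≠ 0 := by
      intro h
      have h3 : (z - ((n:ℂ)+1)) * (z + ((n:ℂ)+1)) = 0 := by linear_combination h
      rcases mul_eq_zero.1 h3 with h' | h'
      · exact ha h'
      · exact hb h'
    have hpair : (z + ((-((n+1 : ℕ) : ℤ) : ℤ) : ℂ))⁻¹ + (z + (((n+1 : ℕ) : ℤ) : ℂ))⁻¹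
        = 2 * z / (z ^ 2 - ((n:ℂ)+1)^2) := by
      push_cast
      rw [show z + -((n:ℂ)+1) = z - ((n:ℂ)+1) by ring]
      field_simp
      ring
    rw [← hpair]
    push_cast
    ring


lemma value_id {z : ℂ} (hz : 0 < z.im) :
    (-(2 * (π:ℂ) * Complex.I))⁻¹ * ((π:ℂ) * Complex.cot ((π:ℂ) * z))
      = (∑' n : ℕ+, ee (((n : ℕ) : ℂ) * z)) + 1 / 2 := by
  set zh : UpperHalfPlane := ⟨z, hz⟩ with hzh
  have hcoe : (zh : ℂ) = z := rfl
  have hq : ‖Complex.exp (2 * (π:ℂ) * Complex.I * z)‖ < 1 := by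
    have := UpperHalfPlane.norm_exp_two_pi_I_lt_one zh
    rwa [hcoe] at this
  have hcot := pi_mul_cot_pi_q_exp zh
  rw [hcoe] at hcot
  set q : ℂ := Complex.exp (2 * (π:ℂ) * Complex.I * z) with hqdef
  have hsummable : Summable (fun n : ℕ => q ^ n) := summable_geometric_of_norm_lt_one hq
  have h1 : ∑' n : ℕ, q ^ n = 1 + ∑' n : ℕ, q ^ (n+1) := by
    rw [Summable.tsum_eq_zero_add hsummable]
    simp
  have h2 : ∑' n : ℕ, q ^ (n+1) = ∑' n : ℕ+, ee (((n : ℕ) : ℂ) * z) := by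
    rw [← Equiv.pnatEquivNat.symm.tsum_eq (f := fun n : ℕ+ => ee (((n : ℕ) : ℂ) * z))]
    apply tsum_congr
    intro m
    have hm : ((Equiv.pnatEquivNat.symm m : ℕ+) : ℕ) = m + 1 := rfl
    rw [hm, ee]
    rw [show 2 * (π:ℝ) * Complex.I * (((m+1 : ℕ) : ℂ) * z) = ((m+1 : ℕ) : ℂ) * (2 * (π:ℂ) * Complex.I * z) by push_cast; ring]
    rw [Complex.exp_nat_mul]
  have hI : (2 * (π:ℂ) * Complex.I) ≠ 0 := by
    simp [Complex.ofReal_ne_zero, pi_ne_zero, Complex.I_ne_zero]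
  rw [hcot]
  rw [show (π:ℂ) * Complex.I - 2 * (π:ℂ) * Complex.I * ∑' (n : ℕ), q ^ n
    = (π:ℂ) * Complex.I - 2 * (π:ℂ) * Complex.I * (1 + ∑' n : ℕ+, ee (((n : ℕ) : ℂ) * z)) by rw [← h2, ← h1]]
  set S := ∑' n : ℕ+, ee (((n : ℕ) : ℂ) * z) with hS
  have hneg : -(2 * (π:ℂ) * Complex.I) ≠ 0 := neg_ne_zero.2 hI
  rw [show (π:ℂ) * Complex.I - 2 * (π:ℂ) * Complex.I * (1 + S)
    = (-(2 * (π:ℂ) * Complex.I)) * (S + 1/2) by ring]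
  rw [inv_mul_cancel_left₀ hneg]

end Stmt5Proof

open Stmt5Proof in
/-- For `z` in the upper half plane,
`Σ_{n ≥ 1} e(nz) = -1/2 + lim_{K → ∞} Σ_{-K < n < K} (-2πi)^{-1} (z+n)^{-1}`,
the limit being over symmetric partial sums. -/
theorem stmt5 (z : ℂ) (hz : 0 < z.im) :
    Filter.Tendsto (fun K : ℕ => ∑ n ∈ Finset.Ioo (-(K : ℤ)) (K : ℤ),
        (-(2 * Real.pi * Complex.I))⁻¹ * (z + (n : ℂ))⁻¹) Filter.atTop
      (nhds ((∑' n : ℕ+, ee (((n : ℕ) : ℂ) * z)) + 1 / 2)) := by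
  have him : z.im ≠ 0 := ne_of_gt hz
  have h3 := tendsto_cot_sum him
  have hS : Filter.Tendsto (fun K : ℕ => ∑ m ∈ Finset.Ioo (-(K : ℤ)) (K : ℤ), (z + (m : ℂ))⁻¹)
      atTop (nhds ((π:ℂ) * Complex.cot ((π:ℂ) * z))) := by
    have h4 := h3.comp (tendsto_sub_atTop_nat 1)
    apply h4.congr'
    filter_upwards [eventually_ge_atTop 1] with K hK
    have hK1 : K - 1 + 1 = K := Nat.succ_pred_eq_of_pos hK
    have := (sum_Ioo_eq him (K - 1)).symm
    rw [hK1] at this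
    exact this
  have hmul := hS.const_mul ((-(2 * (π:ℂ) * Complex.I))⁻¹)
  rw [value_id hz] at hmul
  have heq : (fun K : ℕ => ∑ n ∈ Finset.Ioo (-(K : ℤ)) (K : ℤ),
      (-(2 * Real.pi * Complex.I))⁻¹ * (z + (n : ℂ))⁻¹)
      = fun K : ℕ => (-(2 * (π:ℂ) * Complex.I))⁻¹ *
        ∑ m ∈ Finset.Ioo (-(K : ℤ)) (K : ℤ), (z + (m : ℂ))⁻¹ := by
    funext K
    rw [Finset.mul_sum]
  rw [heq]
  exact hmul
end
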